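/- Let q ≥ 2 and k ≥ 1 be integers such that k(q−1) is even. Then for every q-ary sequence x of length k there exists an index z with 0 ≤ z ≤ kq−1 such that x ⊕_q b(z) is balanced, i.e. w(x ⊕_q b(z)) = k(q−1)/2. -/

import Mathlib

/-- Weight of a q-ary sequence: sum of its symbols. -/
def wt {k : ℕ} (x : Fin k → ℕ) : ℕ := ∑ i, x i

/-- Weighting sequence b(s,p): b_i = (s+1) mod q if i-1 < p, else s
    (indices here are 0-based, so the condition is i < p). -/
def bvec (q k s p : ℕ) : Fin k → ℕ := fun i => if (i : ℕ) < p then (s + 1) % q else s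

/-- The z-th weighting sequence b(z) = b(s,p) where z = s·k + p, 0 ≤ p ≤ k-1. -/
def bz (q k z : ℕ) : Fin k → ℕ := bvec q k (z / k) (z % k)

/-- Symbol-wise addition modulo q. -/
def addq (q : ℕ) {k : ℕ} (x y : Fin k → ℕ) : Fin k → ℕ := fun i => (x i + y i) % q

/-!
Write `b(z)_i` as `bzLift k z i mod q`, where `bzLift k z i = ⌊z/k⌋ + [i < z mod k]`. Going from
`z` to `z + 1` raises `bzLift` by one in the single coordinate `z mod k`, so
`F z = w(x ⊕_q b(z))` increases by at most one per step; moreover `F` has period `kq`. Over one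
period every coordinate of `x ⊕_q b(z)` runs `k` times through `0, …, q - 1`, so the average of
`F` is `k(q-1)/2`. A periodic function on `ℕ` that climbs by steps of at most one attains its
average whenever that average is an integer.
-/

open Finset

theorem Nat.exists_mem_Icc_eq_of_map_succ_le {f : ℕ → ℕ} (hf : ∀ n, f (n + 1) ≤ f n + 1)
    {a b M : ℕ} (hab : a ≤ b) (ha : f a ≤ M) (hb : M ≤ f b) : ∃ n ∈ Icc a b, f n = M := by
  induction b, hab using Nat.le_induction with
  | base => exact ⟨a, left_mem_Icc.2 le_rfl, le_antisymm ha hb⟩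
  | succ b hab ih =>
    by_cases hMb : M ≤ f b
    · obtain ⟨n, hn, hfn⟩ := ih hMb
      exact ⟨n, Icc_subset_Icc_right b.le_succ hn, hfn⟩
    · exact ⟨b + 1, mem_Icc.2 ⟨by omega, le_rfl⟩, by have := hf b; omega⟩

theorem Function.Periodic.exists_lt_eq_of_sum_eq {f : ℕ → ℕ} {N M : ℕ}
    (hper : Function.Periodic f N) (hN : 0 < N) (hf : ∀ n, f (n + 1) ≤ f n + 1)
    (hsum : ∑ n ∈ range N, f n = N * M) : ∃ n < N, f n = M := by
  have hsum' : ∑ n ∈ range N, f n = ∑ _n ∈ range N, M := by simp [hsum]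
  obtain ⟨a, ha, hfa⟩ := exists_le_of_sum_le (nonempty_range_iff.2 hN.ne') hsum'.le
  obtain ⟨b, -, hfb⟩ := exists_le_of_sum_le (nonempty_range_iff.2 hN.ne') hsum'.ge
  obtain ⟨n, hn, hfn⟩ := Nat.exists_mem_Icc_eq_of_map_succ_le hf
    (show a ≤ b + N by have := mem_range.1 ha; omega) hfa (by rwa [hper b])
  exact ⟨n % N, Nat.mod_lt n hN, by rwa [hper.map_mod_nat]⟩

theorem Function.Periodic.sum_range_add {M : Type*} [AddCancelCommMonoid M] {f : ℕ → M}
    {q : ℕ} (hf : Function.Periodic f q) (c : ℕ) :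
    ∑ s ∈ range q, f (c + s) = ∑ s ∈ range q, f s := by
  induction c with
  | zero => simp
  | succ c ih =>
    have hshift := (sum_range_succ' (fun s => f (c + s)) q).symm.trans
      (sum_range_succ (fun s => f (c + s)) q)
    rw [add_zero, hf c] at hshift
    simpa only [← ih, add_right_comm c 1, add_assoc c] using add_right_cancel hshift

theorem Finset.sum_range_add_mod (q c : ℕ) :
    ∑ s ∈ range q, (c + s) % q = ∑ s ∈ range q, s := by
  rw [Function.Periodic.sum_range_add (f := (· % q)) (fun n => Nat.add_mod_right n q) c]
  exact sum_congr rfl fun s hs => Nat.mod_eq_of_lt (mem_range.1 hs)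

theorem Finset.sum_range_mul_eq_sum_sum {M : Type*} [AddCommMonoid M] (f : ℕ → M) (q k : ℕ) :
    ∑ z ∈ range (q * k), f z = ∑ s ∈ range q, ∑ p ∈ range k, f (s * k + p) := by
  induction q with
  | zero => simp
  | succ q ih => rw [sum_range_succ, ← ih, Nat.succ_mul, sum_range_add]

def bzLift (k z : ℕ) (i : Fin k) : ℕ := z / k + if (i : ℕ) < z % k then 1 else 0

section bzLift

variable {k : ℕ} (i : Fin k)

lemma bzLift_mul_add {s p : ℕ} (hp : p < k) :
    bzLift k (s * k + p) i = s + if (i : ℕ) < p then 1 else 0 := by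
  have hk : 0 < k := by omega
  rw [bzLift, Nat.mul_add_mod_of_lt hp, mul_comm, Nat.mul_add_div hk, Nat.div_eq_of_lt hp, add_zero]

lemma bzLift_succ (z : ℕ) :
    bzLift k (z + 1) i = bzLift k z i + if (i : ℕ) = z % k then 1 else 0 := by
  have hk : 0 < k := i.pos
  obtain ⟨s, p, hp, rfl⟩ : ∃ s p, p < k ∧ z = s * k + p :=
    ⟨z / k, z % k, Nat.mod_lt z hk, (Nat.div_add_mod' z k).symm⟩
  rw [Nat.mul_add_mod_of_lt hp, bzLift_mul_add i hp]
  rcases Nat.lt_or_ge (p + 1) k with hp1 | hp1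
  · rw [add_assoc, bzLift_mul_add i hp1]
    split_ifs <;> omega
  · have hz : s * k + p + 1 = (s + 1) * k + 0 := by rw [add_mul]; omega
    rw [hz, bzLift_mul_add i hk]
    split_ifs <;> omega

lemma bzLift_add_mul (z q : ℕ) : bzLift k (z + k * q) i = bzLift k z i + q := by
  have hk : 0 < k := i.pos
  simp only [bzLift, Nat.add_mul_div_left z q hk, Nat.add_mul_mod_self_left]
  omega

end bzLift

section balancing

variable (q : ℕ) {k : ℕ} (x : Fin k → ℕ)

lemma wt_addq_bz (z : ℕ) : wt (addq q x (bz q k z)) = ∑ i, (x i + bzLift k z i) % q := by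
  refine sum_congr rfl fun i _ => ?_
  simp only [addq, bz, bvec, bzLift]
  split_ifs <;> simp only [Nat.add_mod_mod, add_zero]

lemma wt_addq_bz_succ_le (z : ℕ) :
    wt (addq q x (bz q k (z + 1))) ≤ wt (addq q x (bz q k z)) + 1 := by
  have hone : ∑ i : Fin k, (if (i : ℕ) = z % k then 1 else 0) ≤ 1 := by
    rw [sum_boole, Nat.cast_id]
    exact card_le_one.2 fun a ha b hb =>
      Fin.ext ((mem_filter.1 ha).2.trans (mem_filter.1 hb).2.symm)
  calc wt (addq q x (bz q k (z + 1)))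
      = ∑ i, (x i + bzLift k z i + if (i : ℕ) = z % k then 1 else 0) % q := by
        simp only [wt_addq_bz, bzLift_succ, add_assoc]
    _ ≤ ∑ i, ((x i + bzLift k z i) % q + if (i : ℕ) = z % k then 1 else 0) :=
        sum_le_sum fun i _ => (Nat.mod_add_mod _ q _).symm.le.trans (Nat.mod_le _ _)
    _ ≤ wt (addq q x (bz q k z)) + 1 := by
        rw [sum_add_distrib, wt_addq_bz]
        exact Nat.add_le_add_left hone _

lemma periodic_wt_addq_bz : Function.Periodic (fun z => wt (addq q x (bz q k z))) (k * q) := by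
  intro z
  simp only [wt_addq_bz, bzLift_add_mul, ← add_assoc, Nat.add_mod_right]

lemma sum_range_mul_mod_add_bzLift (i : Fin k) :
    ∑ z ∈ range (q * k), (x i + bzLift k z i) % q = k * ∑ s ∈ range q, s := by
  calc ∑ z ∈ range (q * k), (x i + bzLift k z i) % q
      = ∑ s ∈ range q, ∑ p ∈ range k, ((x i + if (i : ℕ) < p then 1 else 0) + s) % q := by
        rw [sum_range_mul_eq_sum_sum]
        refine sum_congr rfl fun s _ => sum_congr rfl fun p hp => ?_
        rw [bzLift_mul_add i (mem_range.1 hp), add_comm s, add_assoc]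
    _ = k * ∑ s ∈ range q, s := by
        rw [sum_comm]
        simp only [sum_range_add_mod, sum_const, card_range, smul_eq_mul]

lemma two_mul_sum_range_wt_addq_bz :
    2 * ∑ z ∈ range (k * q), wt (addq q x (bz q k z)) = k * q * (k * (q - 1)) := by
  rw [mul_comm k q]
  simp only [wt_addq_bz]
  rw [sum_comm, sum_congr rfl fun i _ => sum_range_mul_mod_add_bzLift q x i, sum_const, card_univ,
    Fintype.card_fin, smul_eq_mul, show q * k * (k * (q - 1)) = k * (k * (q * (q - 1))) by ring,
    ← sum_range_id_mul_two]
  ring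

end balancing

theorem stmt8_general (q k : ℕ) (hq : 2 ≤ q) (hk : 1 ≤ k) (heven : Even (k * (q - 1)))
    (x : Fin k → ℕ) :
    ∃ z : ℕ, z ≤ k * q - 1 ∧ 2 * wt (addq q x (bz q k z)) = k * (q - 1) := by
  obtain ⟨M, hM⟩ := heven
  have hsum := two_mul_sum_range_wt_addq_bz q x
  obtain ⟨z, hz, hzM⟩ := (periodic_wt_addq_bz q x).exists_lt_eq_of_sum_eq
    (Nat.mul_pos hk (by omega)) (wt_addq_bz_succ_le q x) (M := M) (by rw [hM] at hsum; linarith)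
  exact ⟨z, by omega, by omega⟩

/-- if k(q-1) is even, every q-ary sequence x of length k can be balanced:
    there is a z, 0 ≤ z ≤ kq-1, with w(x ⊕_q b(z)) = k(q-1)/2. -/
theorem stmt8 (q k : ℕ) (hq : 2 ≤ q) (hk : 1 ≤ k) (heven : Even (k * (q - 1)))
    (x : Fin k → ℕ) (hx : ∀ i, x i < q) :
    ∃ z : ℕ, z ≤ k * q - 1 ∧ 2 * wt (addq q x (bz q k z)) = k * (q - 1) :=
  stmt8_general q k hq hk heven x
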